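/- Let λ > 0, s1, s2, sB > 0, and let α, β ≥ 1 be real with α ≠ β + 1, and set δ = 1/(β + 1 − α). Define E6 = (0, (s2/sB)^δ / (1 + (s2/sB)^δ), 1 / (1 + (s2/sB)^δ)). Then E6 is an equilibrium of the language competition system (F1 = F2 = F3 = 0 at E6), its second and third coordinates are strictly positive, and its coordinates sum to 1. -/

import Mathlib

open Real

set_option linter.unusedVariables false

/-- Right-hand side for the first monolingual group. -/
noncomputable def F1 (lam s1 s2 sB α β m1 m2 b : ℝ) : ℝ :=
  lam * s1 * m1 ^ α * b ^ (β + 1) - lam * sB * b ^ α * m1 ^ (β + 1)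

/-- Right-hand side for the second monolingual group. -/
noncomputable def F2 (lam s1 s2 sB α β m1 m2 b : ℝ) : ℝ :=
  lam * s2 * m2 ^ α * b ^ (β + 1) - lam * sB * b ^ α * m2 ^ (β + 1)

/-- Right-hand side for the bilingual group. -/
noncomputable def F3 (lam s1 s2 sB α β m1 m2 b : ℝ) : ℝ :=
  lam * sB * b ^ α * m1 ^ (β + 1) + lam * sB * b ^ α * m2 ^ (β + 1)
    - lam * s1 * m1 ^ α * b ^ (β + 1) - lam * s2 * m2 ^ α * b ^ (β + 1)

/-!
On the face `m1 = 0` the first equation vanishes identically, and since the three right-hand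
sides sum to zero it remains to balance the second one. Writing `m2 = c b`, the equation
`s2 m2^α b^(β+1) = sB b^α m2^(β+1)` reduces to `c^(β+1-α) = s2 / sB`, solved by
`c = (s2 / sB)^δ`; normalising `m2 + b = 1` gives `E6`.
-/

theorem F1_add_F2_add_F3 (lam s1 s2 sB α β m1 m2 b : ℝ) :
    F1 lam s1 s2 sB α β m1 m2 b + F2 lam s1 s2 sB α β m1 m2 b
      + F3 lam s1 s2 sB α β m1 m2 b = 0 := by
  unfold F1 F2 F3
  ring

section LanguageCompetition

variable {lam s1 s2 sB α β : ℝ}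

theorem F3_eq_zero_of_F1_of_F2 {m1 m2 b : ℝ} (h1 : F1 lam s1 s2 sB α β m1 m2 b = 0)
    (h2 : F2 lam s1 s2 sB α β m1 m2 b = 0) : F3 lam s1 s2 sB α β m1 m2 b = 0 := by
  linear_combination F1_add_F2_add_F3 lam s1 s2 sB α β m1 m2 b - h1 - h2

theorem F1_zero_left (hα : α ≠ 0) (hβ : β + 1 ≠ 0) (m2 b : ℝ) :
    F1 lam s1 s2 sB α β 0 m2 b = 0 := by
  simp [F1, zero_rpow hα, zero_rpow hβ]

theorem F2_mul_eq_zero_of_rpow_eq_div {c b : ℝ} (hsB : sB ≠ 0) (hc : 0 < c) (hb : 0 ≤ b)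
    (hratio : c ^ (β + 1 - α) = s2 / sB) (m1 : ℝ) :
    F2 lam s1 s2 sB α β m1 (c * b) b = 0 := by
  have hsplit : c ^ (β + 1) = c ^ α * (s2 / sB) := by
    rw [← hratio, ← rpow_add hc]
    ring_nf
  unfold F2
  rw [mul_rpow hc.le hb, mul_rpow hc.le hb, hsplit]
  field_simp
  ring

end LanguageCompetition

theorem E6_is_equilibrium_general (lam s1 s2 sB α β δ : ℝ)
    (hs2 : 0 < s2) (hsB : 0 < sB)
    (hα : 1 ≤ α) (hβ : 1 ≤ β) (hne : α ≠ β + 1) (hδ : δ = 1 / (β + 1 - α)) :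
    let m2 : ℝ := (s2 / sB) ^ δ / (1 + (s2 / sB) ^ δ)
    let b : ℝ := 1 / (1 + (s2 / sB) ^ δ)
    (F1 lam s1 s2 sB α β 0 m2 b = 0 ∧
     F2 lam s1 s2 sB α β 0 m2 b = 0 ∧
     F3 lam s1 s2 sB α β 0 m2 b = 0) ∧
    (0 < m2 ∧ 0 < b) ∧
    0 + m2 + b = 1 := by
  intro m2 b
  set c : ℝ := (s2 / sB) ^ δ
  have hc : 0 < c := rpow_pos_of_pos (div_pos hs2 hsB) δ
  have hb : 0 < b := by positivity
  have hm2 : m2 = c * b := (mul_one_div c (1 + c)).symm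
  have hratio : c ^ (β + 1 - α) = s2 / sB := by
    rw [show c = (s2 / sB) ^ (β + 1 - α)⁻¹ by rw [← one_div, ← hδ]]
    exact rpow_inv_rpow (div_pos hs2 hsB).le (sub_ne_zero.mpr hne.symm)
  have hF1 : F1 lam s1 s2 sB α β 0 m2 b = 0 := F1_zero_left (by linarith) (by linarith) m2 b
  have hF2 : F2 lam s1 s2 sB α β 0 m2 b = 0 := by
    rw [hm2]
    exact F2_mul_eq_zero_of_rpow_eq_div hsB.ne' hc hb.le hratio 0
  refine ⟨⟨hF1, hF2, F3_eq_zero_of_F1_of_F2 hF1 hF2⟩, ⟨by positivity, hb⟩, ?_⟩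
  rw [zero_add, ← add_div, add_comm, div_self (by positivity)]

/-- The boundary point `E6` (first monolingual group extinct) is an equilibrium of the
language competition system, its second and third coordinates are strictly positive,
and its coordinates sum to 1. -/
theorem E6_is_equilibrium (lam s1 s2 sB α β δ : ℝ)
    (hlam : 0 < lam) (hs1 : 0 < s1) (hs2 : 0 < s2) (hsB : 0 < sB)
    (hα : 1 ≤ α) (hβ : 1 ≤ β) (hne : α ≠ β + 1) (hδ : δ = 1 / (β + 1 - α)) :
    let m2 : ℝ := (s2 / sB) ^ δ / (1 + (s2 / sB) ^ δ)
    let b : ℝ := 1 / (1 + (s2 / sB) ^ δ)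
    (F1 lam s1 s2 sB α β 0 m2 b = 0 ∧
     F2 lam s1 s2 sB α β 0 m2 b = 0 ∧
     F3 lam s1 s2 sB α β 0 m2 b = 0) ∧
    (0 < m2 ∧ 0 < b) ∧
    0 + m2 + b = 1 :=
  E6_is_equilibrium_general lam s1 s2 sB α β δ hs2 hsB hα hβ hne hδ
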